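/- Let (P,≤) be a poset, U ⊆ P an up-set and D ⊆ P a down-set, and k a field. Then the vector space of natural transformations Hom(k[U], k[D]) is isomorphic to k^{π₀(U ∩ D)}, the functions from the set of connected components of U ∩ D to k. -/

import Mathlib

open CategoryTheory

noncomputable section
attribute [local instance] Classical.propDecidable
set_option linter.unusedSectionVars false

variable (R : Type) [Ring R] {P : Type} [Preorder P]

/-- Condition that a subset is order-convex. -/
def IsConvexSet (I : Set P) : Prop := ∀ ⦃x y z : P⦄, x ∈ I → z ∈ I → x ≤ y → y ≤ z → y ∈ I

/-- The value of the interval persistence module at a point. -/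
def intervalObj (I : Set P) (a : P) : Submodule R R :=
  if a ∈ I then (⊤ : Submodule R R) else ⊥

lemma intervalObj_eq_zero {I : Set P} {a : P} (h : a ∉ I) (x : intervalObj R I a) :
    x = 0 := by
  have hx := x.2
  simp only [intervalObj, if_neg h, Submodule.mem_bot] at hx
  exact Subtype.ext hx

/-- The structure map of the interval module between two degrees. -/
def intervalMapAux (I : Set P) (a b : P) :
    (intervalObj R I a) →ₗ[R] (intervalObj R I b) :=
  if h : a ∈ I ∧ b ∈ I then
    Submodule.inclusion (by simp [intervalObj, h.1, h.2])
  else 0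

lemma intervalMapAux_coe {I : Set P} {a b : P} (ha : a ∈ I) (hb : b ∈ I)
    (x : intervalObj R I a) : ((intervalMapAux R I a b x : R)) = (x : R) := by
  simp [intervalMapAux, ha, hb]

lemma intervalMapAux_of_not {I : Set P} {a b : P} (h : ¬(a ∈ I ∧ b ∈ I))
    (x : intervalObj R I a) : intervalMapAux R I a b x = 0 := by
  simp [intervalMapAux, h]

/-- The interval (indicator) persistence module of a convex set `I`,
as a functor from the preorder `P` to `R`-modules. -/
def intervalModule (I : Set P) (hI : IsConvexSet I) : P ⥤ ModuleCat R where
  obj a := ModuleCat.of R (intervalObj R I a)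
  map {a b} f := ModuleCat.ofHom (intervalMapAux R I a b)
  map_id a := by
    ext x
    by_cases h : a ∈ I
    · exact intervalMapAux_coe R h h x
    · rw [intervalObj_eq_zero R h x]
      simp
  map_comp {a b c} f g := by
    ext x
    show ((intervalMapAux R I a c x : intervalObj R I c) : R) =
      ((intervalMapAux R I b c (intervalMapAux R I a b x) : intervalObj R I c) : R)
    by_cases ha : a ∈ I
    · by_cases hc : c ∈ I
      · have hb : b ∈ I := hI ha hc (leOfHom f) (leOfHom g)
        rw [intervalMapAux_coe R ha hc, intervalMapAux_coe R hb hc,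
          intervalMapAux_coe R ha hb]
      · rw [intervalMapAux_of_not R (fun h => hc h.2),
          intervalMapAux_of_not R (fun h => hc h.2)]
    · rw [intervalObj_eq_zero R ha x]
      simp

end

lemma IsConvexSet.of_ordConnected {P : Type} [Preorder P] {s : Set P}
    (h : s.OrdConnected) : IsConvexSet s :=
  fun _ _ _ hx hz hxy hyz => h.out hx hz ⟨hxy, hyz⟩

/-- The zigzag (comparability) setoid on a subset of a preordered set: the equivalence
relation generated by comparability within the subset. -/
def zigzagSetoid {P : Type} [Preorder P] (S : Set P) : Setoid S :=
  Relation.EqvGen.setoid (fun x y : S => (x : P) ≤ y ∨ (y : P) ≤ x)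

/-- The set of zigzag-connected components of a subset of a preordered set. -/
def pi0 {P : Type} [Preorder P] (S : Set P) : Type :=
  Quotient (zigzagSetoid S)

/-! A natural transformation `η : k[U] ⟶ k[D]` is determined by the scalars `η_a(1)` for
`a ∈ U ∩ D`, since away from `U ∩ D` its source or its target vanishes, and naturality along
`a ≤ b` forces these scalars to agree, so they are constant on zigzag components. Conversely,
any function on `π₀(U ∩ D)` gives a natural family of multiplication maps: for `a ≤ b` with
`a ∈ U` and `b ∈ D`, the up-set and down-set conditions put both points in `U ∩ D`. -/

namespace intervalObj

variable {R : Type} [Ring R] {P : Type} {I : Set P} {a b : P}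

def one (h : a ∈ I) : intervalObj R I a :=
  ⟨1, by simp [intervalObj, h]⟩

@[simp]
lemma coe_one (h : a ∈ I) : ((one h : intervalObj R I a) : R) = 1 :=
  rfl

lemma eq_smul_one (h : a ∈ I) (x : intervalObj R I a) : x = (x : R) • one h :=
  Subtype.ext (by simp [one])

lemma intervalMapAux_one [Preorder P] (ha : a ∈ I) (hb : b ∈ I) :
    intervalMapAux R I a b (one ha) = one hb :=
  Subtype.ext (intervalMapAux_coe R ha hb _)

end intervalObj

namespace intervalModule

open CategoryTheory

variable {R : Type} [Ring R] {P : Type} [Preorder P] {I J : Set P}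
  {hI : IsConvexSet I} {hJ : IsConvexSet J}

noncomputable def homApp (η : intervalModule R I hI ⟶ intervalModule R J hJ) (a : P) :
    intervalObj R I a →ₗ[R] intervalObj R J a :=
  (η.app a).hom

lemma homApp_naturality (η : intervalModule R I hI ⟶ intervalModule R J hJ) {a b : P}
    (hab : a ≤ b) (x : intervalObj R I a) :
    homApp η b (intervalMapAux R I a b x) = intervalMapAux R J a b (homApp η a x) :=
  congr($(η.naturality (homOfLE hab)) x)

lemma hom_ext {η η' : intervalModule R I hI ⟶ intervalModule R J hJ}
    (h : ∀ a, homApp η a = homApp η' a) : η = η' := by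
  ext a : 2
  exact ModuleCat.hom_ext (h a)

noncomputable def homMk (φ : ∀ a, intervalObj R I a →ₗ[R] intervalObj R J a)
    (hφ : ∀ a b, a ≤ b → ∀ x,
      φ b (intervalMapAux R I a b x) = intervalMapAux R J a b (φ a x)) :
    intervalModule R I hI ⟶ intervalModule R J hJ where
  app a := ModuleCat.ofHom (φ a)
  naturality a b f := ModuleCat.hom_ext (LinearMap.ext (hφ a b (leOfHom f)))

@[simp]
lemma homApp_homMk (φ : ∀ a, intervalObj R I a →ₗ[R] intervalObj R J a) (hφ) (a : P) :
    homApp (homMk (hI := hI) (hJ := hJ) φ hφ) a = φ a :=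
  rfl

end intervalModule

namespace pi0

variable {P : Type} [Preorder P] {S : Set P}

abbrev mk (a : S) : pi0 S :=
  Quotient.mk (zigzagSetoid S) a

lemma mk_eq_mk_of_le {a b : S} (h : (a : P) ≤ b) : mk a = mk b :=
  Quotient.sound (.rel _ _ (.inl h))

def lift {β : Type*} (f : S → β) (hf : ∀ a b : S, (a : P) ≤ b → f a = f b) : pi0 S → β :=
  Quotient.lift f fun _ _ hab =>
    Setoid.eqvGen_le (s := Setoid.ker f)
      (fun a b h => h.elim (hf a b) fun h => (hf b a h).symm) hab

end pi0

lemma IsUpperSet.isConvexSet {P : Type} [Preorder P] {U : Set P} (hU : IsUpperSet U) :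
    IsConvexSet U :=
  .of_ordConnected hU.ordConnected

lemma IsLowerSet.isConvexSet {P : Type} [Preorder P] {D : Set P} (hD : IsLowerSet D) :
    IsConvexSet D :=
  .of_ordConnected hD.ordConnected

namespace intervalModule

open CategoryTheory intervalObj

variable {k : Type} [CommRing k] {P : Type} [Preorder P]

section

variable {I J : Set P} {hI : IsConvexSet I} {hJ : IsConvexSet J}

lemma hom_ext_one {η η' : intervalModule k I hI ⟶ intervalModule k J hJ}
    (h : ∀ a (ha : a ∈ I ∩ J), homApp η a (one ha.1) = homApp η' a (one ha.1)) : η = η' := by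
  refine hom_ext fun a => LinearMap.ext fun x => ?_
  by_cases haI : a ∈ I
  · by_cases haJ : a ∈ J
    · rw [eq_smul_one haI x, map_smul, map_smul, h a ⟨haI, haJ⟩]
    · exact (intervalObj_eq_zero k haJ _).trans (intervalObj_eq_zero k haJ _).symm
  · simp [intervalObj_eq_zero k haI x]

lemma coe_homApp_one_eq_of_le (η : intervalModule k I hI ⟶ intervalModule k J hJ) {a b : P}
    (ha : a ∈ I ∩ J) (hb : b ∈ I ∩ J) (hab : a ≤ b) :
    (homApp η a (one ha.1) : k) = homApp η b (one hb.1) := by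
  rw [← intervalMapAux_one ha.1 hb.1, homApp_naturality η hab, intervalMapAux_coe k ha.2 hb.2]

noncomputable def evalOne :
    (intervalModule k I hI ⟶ intervalModule k J hJ) →ₗ[k] (pi0 (I ∩ J) → k) where
  toFun η := pi0.lift (fun a => (homApp η a (one a.2.1) : k))
    fun a b => coe_homApp_one_eq_of_le η a.2 b.2
  map_add' _ _ := funext <| Quotient.ind fun _ => rfl
  map_smul' _ _ := funext <| Quotient.ind fun _ => rfl

@[simp]
lemma evalOne_mk (η : intervalModule k I hI ⟶ intervalModule k J hJ) (a : (I ∩ J : Set P)) :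
    evalOne η (pi0.mk a) = homApp η a (one a.2.1) :=
  rfl

lemma evalOne_injective :
    Function.Injective
      (evalOne : (intervalModule k I hI ⟶ intervalModule k J hJ) →ₗ[k] _) := fun _ _ h =>
  hom_ext_one fun a ha => Subtype.ext (congr_fun h (pi0.mk ⟨a, ha⟩))

end

section

variable {U D : Set P}

open Classical in
noncomputable def scaleApp (f : pi0 (U ∩ D) → k) (a : P) :
    intervalObj k U a →ₗ[k] intervalObj k D a :=
  if h : a ∈ U ∩ D then
    f (pi0.mk ⟨a, h⟩) • Submodule.inclusion (by simp [intervalObj, h.2])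
  else 0

lemma coe_scaleApp (f : pi0 (U ∩ D) → k) {a : P} (h : a ∈ U ∩ D) (x : intervalObj k U a) :
    (scaleApp f a x : k) = f (pi0.mk ⟨a, h⟩) * x := by
  simp only [scaleApp, dif_pos h, LinearMap.smul_apply, Submodule.coe_smul, smul_eq_mul]
  rfl

lemma scaleApp_naturality (hU : IsUpperSet U) (hD : IsLowerSet D) (f : pi0 (U ∩ D) → k)
    {a b : P} (hab : a ≤ b) (x : intervalObj k U a) :
    scaleApp f b (intervalMapAux k U a b x) = intervalMapAux k D a b (scaleApp f a x) := by
  by_cases haU : a ∈ U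
  swap
  · simp [intervalObj_eq_zero k haU x]
  by_cases hbD : b ∈ D
  swap
  · exact (intervalObj_eq_zero k hbD _).trans (intervalObj_eq_zero k hbD _).symm
  have ha : a ∈ U ∩ D := ⟨haU, hD hab hbD⟩
  have hb : b ∈ U ∩ D := ⟨hU hab haU, hbD⟩
  apply Subtype.ext
  rw [coe_scaleApp f hb, intervalMapAux_coe k ha.1 hb.1, intervalMapAux_coe k ha.2 hb.2,
    coe_scaleApp f ha, pi0.mk_eq_mk_of_le (a := ⟨a, ha⟩) (b := ⟨b, hb⟩) hab]

noncomputable def ofPi0 (hU : IsUpperSet U) (hD : IsLowerSet D) (f : pi0 (U ∩ D) → k) :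
    intervalModule k U hU.isConvexSet ⟶ intervalModule k D hD.isConvexSet :=
  homMk (scaleApp f) fun _ _ hab => scaleApp_naturality hU hD f hab

lemma evalOne_ofPi0 (hU : IsUpperSet U) (hD : IsLowerSet D) (f : pi0 (U ∩ D) → k) :
    evalOne (ofPi0 hU hD f) = f :=
  funext <| Quotient.ind fun a => by simp [ofPi0, coe_scaleApp f a.2]

end

end intervalModule

open CategoryTheory in
/-- For an up-set `U` and a down-set `D` in a poset `P`, the space of natural
transformations `Hom(k[U], k[D])` is isomorphic to the space of `k`-valued functions
on the set `π₀(U ∩ D)` of connected components of `U ∩ D`. -/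
theorem hom_upset_downset (k : Type) [Field k] {P : Type} [PartialOrder P]
    (U D : Set P) (hU : IsUpperSet U) (hD : IsLowerSet D) :
    Nonempty ((intervalModule k U (fun _ _ _ hx _ hxy _ => hU hxy hx) ⟶
        intervalModule k D (fun _ _ _ _ hz _ hyz => hD hyz hz)) ≃ₗ[k]
      (pi0 (U ∩ D) → k)) :=
  ⟨.ofBijective intervalModule.evalOne
    ⟨intervalModule.evalOne_injective,
      fun f => ⟨intervalModule.ofPi0 hU hD f, intervalModule.evalOne_ofPi0 hU hD f⟩⟩⟩
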